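/- Let D be the discriminant of a real quadratic field K = Q(√d) with d squarefree and positive, and let κ(D) denote the caliber number of K, i.e., the number of reduced primitive binary quadratic forms of discriminant D. Then Σ_{A < √D/2} ρ_D(A) ≤ κ(D) ≤ Σ_{A < √D} ρ_D(A), where ρ_D(A) = #{ [B] ∈ Z/2AZ : B² ≡ D (mod 4A) }. -/

import Mathlib

noncomputable section

/-- The binary quadratic form `[A,B,C]` is reduced of discriminant `D`. -/
def IsReducedForm (D A B C : ℤ) : Prop :=
  D = B ^ 2 - 4 * A * C ∧ 0 < A ∧ B < 0 ∧ C < 0 ∧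
    ((|B| : ℤ) : ℝ) < Real.sqrt D ∧
    Real.sqrt D - ((|B| : ℤ) : ℝ) < 2 * (A : ℝ) ∧
    2 * (A : ℝ) < Real.sqrt D + ((|B| : ℤ) : ℝ)

/-- The form `[A,B,C]` is primitive. -/
def IsPrimitiveForm (A B C : ℤ) : Prop := Int.gcd A (Int.gcd B C) = 1

/-- The caliber number: the number of reduced primitive forms of discriminant `D`. -/
def caliber (D : ℤ) : ℕ :=
  Nat.card {f : ℤ × ℤ × ℤ //
    IsReducedForm D f.1 f.2.1 f.2.2 ∧ IsPrimitiveForm f.1 f.2.1 f.2.2}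

/-- `rho D A` is the number of classes `[B] ∈ ℤ/2Aℤ` with `B ^ 2 ≡ D (mod 4A)`. -/
def rho (D : ℤ) (A : ℕ) : ℕ :=
  Nat.card {B : ZMod (2 * A) //
    ∃ b : ℤ, (b : ZMod (2 * A)) = B ∧ (4 * (A : ℤ)) ∣ b ^ 2 - D}

/-- The discriminant of the real quadratic field `ℚ(√d)` for `d` squarefree. -/
def disc (d : ℕ) : ℤ := if d % 4 = 1 then (d : ℤ) else 4 * d

/-- The Kronecker symbol `(D / p)` for a prime `p` (via the Jacobi symbol for odd `p`). -/
def kronecker (D : ℤ) (p : ℕ) : ℤ :=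
  if p = 2 then (if D % 8 = 1 then 1 else if D % 8 = 5 then -1 else 0)
  else jacobiSym D p

end


/-!
A reduced form `[A, B, C]` of discriminant `D` has `A < √D`, and its middle coefficient lies in
the window `-√D < B < 2A - √D` of length `2A`. Hence it is determined by `A` and the class of
`B` modulo `2A`, a class with `B² ≡ D (mod 4A)`, since `C = (B² - D) / 4A`: this gives the upper
bound. Conversely, if `2A < √D`, every such class has a representative in the window (whose ends
are not integers, `√D` being irrational), and the form it defines is reduced. It is primitive
because a prime `p` dividing `A`, `B`, `C` would give `D = p² (b² - 4ac)`, which is impossible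
for `D = d` or `D = 4d` with `d` squarefree.
-/

open Finset in
theorem Set.Finite.sum_natCard_fiberwise {α β : Type*} [DecidableEq β] {S : Set α}
    (hS : S.Finite) (g : α → β) (t : Finset β) :
    ∑ b ∈ t, Nat.card {x ∈ S | g x = b} = Nat.card {x ∈ S | g x ∈ t} := by
  classical
  have card_sep (p : α → Prop) [DecidablePred p] :
      Nat.card {x ∈ S | p x} = #{x ∈ hS.toFinset | p x} := by
    rw [Nat.card_coe_set_eq, ← Set.ncard_coe_finset]
    congr
    ext
    simp
  simp only [card_sep, card_eq_sum_ones, sum_fiberwise_eq_sum_filter]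

theorem Int.exists_modEq_mem_Ioo {x : ℝ} (hx : Irrational x) {m : ℤ} (hm : 0 < m) (b : ℤ) :
    ∃ B : ℤ, B ≡ b [ZMOD m] ∧ x < B ∧ (B : ℝ) < x + m := by
  set n := ⌊x⌋
  have hnx : (n : ℝ) < x := lt_of_le_of_ne (Int.floor_le x) (hx.ne_int n).symm
  refine ⟨n + 1 + (b - (n + 1)) % m, ?_, ?_, ?_⟩
  · simpa using ((b - (n + 1)).mod_modEq m).add_left (n + 1)
  · have hr : (0 : ℝ) ≤ ((b - (n + 1)) % m : ℤ) := by
      exact_mod_cast Int.emod_nonneg (b - (n + 1)) hm.ne'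
    have : x < n + 1 := Int.lt_floor_add_one x
    push_cast at hr ⊢
    linarith
  · have : (b - (n + 1)) % m + 1 ≤ m := Int.emod_lt_of_pos _ hm
    have : (((b - (n + 1)) % m : ℤ) : ℝ) + 1 ≤ m := by exact_mod_cast this
    push_cast
    linarith

section ReducedForm

variable {D A B C : ℤ}

theorem IsReducedForm.mem_window (h : IsReducedForm D A B C) :
    -√D < B ∧ (B : ℝ) < 2 * A - √D ∧ (A : ℝ) < √D := by
  obtain ⟨-, -, hB, -, h₁, h₂, h₃⟩ := h
  rw [abs_of_neg hB, Int.cast_neg] at h₁ h₂ h₃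
  exact ⟨by linarith, by linarith, by linarith⟩

theorem IsReducedForm.sq_lt (h : IsReducedForm D A B C) : A ^ 2 < D ∧ B ^ 2 < D := by
  obtain ⟨hB, -, hA⟩ := h.mem_window
  have hA₀ : (0 : ℝ) ≤ A := by exact_mod_cast h.2.1.le
  have hB₀ : (0 : ℝ) ≤ -B := by exact_mod_cast (neg_pos.mpr h.2.2.1).le
  have hA2 := (Real.lt_sqrt hA₀).mp hA
  have hB2 := (Real.lt_sqrt hB₀).mp (by linarith)
  rw [neg_sq] at hB2
  exact ⟨by exact_mod_cast hA2, by exact_mod_cast hB2⟩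

theorem isReducedForm_of_mem_window (hD : D = B ^ 2 - 4 * A * C) (hA : 0 < A)
    (hA' : 2 * A < √D) (hlo : -√D < B) (hhi : (B : ℝ) < 2 * A - √D) :
    IsReducedForm D A B C := by
  have hA₀ : (0 : ℝ) < A := by exact_mod_cast hA
  have hB : B < 0 := by exact_mod_cast (show (B : ℝ) < 0 by linarith)
  have hBD : B ^ 2 < D := by
    have hB₀ : (0 : ℝ) ≤ -B := by exact_mod_cast (neg_pos.mpr hB).le
    have := (Real.lt_sqrt hB₀).mp (by linarith)
    rw [neg_sq] at this
    exact_mod_cast this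
  refine ⟨hD, hA, hB, by nlinarith, ?_, ?_, ?_⟩ <;>
    · rw [abs_of_neg hB, Int.cast_neg]
      linarith

theorem IsReducedForm.eq_of_modEq {B₁ C₁ B₂ C₂ : ℤ} (h₁ : IsReducedForm D A B₁ C₁)
    (h₂ : IsReducedForm D A B₂ C₂) (hB : B₁ ≡ B₂ [ZMOD 2 * A]) : B₁ = B₂ ∧ C₁ = C₂ := by
  obtain ⟨lo₁, hi₁, -⟩ := h₁.mem_window
  obtain ⟨lo₂, hi₂, -⟩ := h₂.mem_window
  have hlt : |B₂ - B₁| < 2 * A := by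
    have : |(B₂ : ℝ) - B₁| < 2 * A := abs_sub_lt_iff.mpr ⟨by linarith, by linarith⟩
    exact_mod_cast this
  have hBB : B₁ = B₂ := (sub_eq_zero.mp (Int.eq_zero_of_abs_lt_dvd hB.dvd hlt)).symm
  subst hBB
  have hAC : 4 * A * C₁ = 4 * A * C₂ := by linarith [h₁.1, h₂.1]
  exact ⟨rfl, mul_left_cancel₀ (by linarith [h₁.2.1]) hAC⟩

theorem exists_isReducedForm_modEq (hirr : Irrational √D) (hA : 0 < A) (hA' : 2 * A < √D)
    {b : ℤ} (hb : 4 * A ∣ b ^ 2 - D) : ∃ B C, IsReducedForm D A B C ∧ B ≡ b [ZMOD 2 * A] := by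
  obtain ⟨B, hBb, hlo, hhi⟩ := Int.exists_modEq_mem_Ioo hirr.neg (by positivity : 0 < 2 * A) b
  have hdvd : 4 * A ∣ B ^ 2 - D := by
    obtain ⟨k, hk⟩ := hBb.symm.dvd
    have : B ^ 2 - b ^ 2 = 4 * A * (k * (b + A * k)) := by
      rw [show B = b + 2 * A * k by linarith]; ring
    rw [show B ^ 2 - D = (B ^ 2 - b ^ 2) + (b ^ 2 - D) by ring, this]
    exact dvd_add (dvd_mul_right _ _) hb
  obtain ⟨C, hC⟩ := hdvd
  refine ⟨B, C, isReducedForm_of_mem_window (by linarith) hA hA' hlo ?_, hBb⟩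
  push_cast at hhi
  linarith

end ReducedForm

def reducedForms (D : ℤ) : Set (ℤ × ℤ × ℤ) :=
  {f | IsReducedForm D f.1 f.2.1 f.2.2 ∧ IsPrimitiveForm f.1 f.2.1 f.2.2}

theorem finite_reducedForms (D : ℤ) : (reducedForms D).Finite := by
  refine (Set.finite_Icc ((1 : ℤ), -D, -D) (D, 0, 0)).subset ?_
  rintro ⟨A, B, C⟩ ⟨h, -⟩
  obtain ⟨hA2, hB2⟩ := h.sq_lt
  obtain ⟨hD, hA, hB, hC, -⟩ := h
  simp only [Set.mem_Icc, Prod.mk_le_mk]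
  exact ⟨⟨hA, by nlinarith, by nlinarith⟩, by nlinarith, hB.le, hC.le⟩

theorem sum_card_fiber_eq (D : ℤ) (s : Finset ℕ) :
    ∑ A ∈ s, Nat.card {f ∈ reducedForms D | f.1 = A} =
      Nat.card {f ∈ reducedForms D | f.1 ∈ s.map Nat.castEmbedding} := by
  rw [← (finite_reducedForms D).sum_natCard_fiberwise Prod.fst, Finset.sum_map]
  rfl

theorem card_fiber_le_rho (D : ℤ) {A : ℕ} (hA : 0 < A) :
    Nat.card {f ∈ reducedForms D | f.1 = A} ≤ rho D A := by
  have : NeZero (2 * A) := ⟨by omega⟩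
  have hdvd (f : {f ∈ reducedForms D | f.1 = A}) : 4 * (A : ℤ) ∣ f.1.2.1 ^ 2 - D := by
    obtain ⟨⟨A', B, C⟩, ⟨h, -⟩, (rfl : A' = A)⟩ := f
    exact ⟨C, by simp only at h ⊢; linarith [h.1]⟩
  refine Nat.card_le_card_of_injective (fun f => ⟨f.1.2.1, f.1.2.1, rfl, hdvd f⟩) ?_
  rintro ⟨⟨A₁, B₁, C₁⟩, ⟨h₁, _⟩, (rfl : A₁ = A)⟩ ⟨⟨A₂, B₂, C₂⟩, ⟨h₂, _⟩, (rfl : A₂ = A)⟩ h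
  have hB : B₁ ≡ B₂ [ZMOD 2 * A] := by
    simpa [ZMod.intCast_eq_intCast_iff] using congrArg Subtype.val h
  obtain ⟨rfl, rfl⟩ := h₁.eq_of_modEq h₂ hB
  rfl

theorem rho_le_card_fiber {D : ℤ} (hirr : Irrational √D)
    (hprim : ∀ A B C : ℤ, D = B ^ 2 - 4 * A * C → IsPrimitiveForm A B C)
    {A : ℕ} (hA : 0 < A) (hA' : 2 * (A : ℝ) < √D) :
    rho D A ≤ Nat.card {f ∈ reducedForms D | f.1 = A} := by
  have := ((finite_reducedForms D).subset
    (Set.sep_subset _ fun f : ℤ × ℤ × ℤ => f.1 = A)).to_subtype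
  have lift
      (β : {B : ZMod (2 * A) // ∃ b : ℤ, (b : ZMod (2 * A)) = B ∧ 4 * (A : ℤ) ∣ b ^ 2 - D}) :
      ∃ f ∈ {f ∈ reducedForms D | f.1 = A}, (f.2.1 : ZMod (2 * A)) = β := by
    obtain ⟨-, b, rfl, hb⟩ := β
    obtain ⟨B, C, h, hBb⟩ :=
      exists_isReducedForm_modEq hirr (by exact_mod_cast hA) (by exact_mod_cast hA') hb
    refine ⟨(A, B, C), ⟨⟨h, hprim _ _ _ h.1⟩, rfl⟩, ?_⟩
    exact (ZMod.intCast_eq_intCast_iff _ _ _).mpr (by push_cast; exact hBb)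
  choose F hF hFβ using lift
  refine Nat.card_le_card_of_injective (fun β => ⟨F β, hF β⟩) fun β β' h => Subtype.ext ?_
  rw [← hFβ β, ← hFβ β', show F β = F β' from congrArg Subtype.val h]

open scoped Classical in
theorem caliber_le_sum_rho (D : ℤ) :
    caliber D ≤ ∑ A ∈ (Finset.Icc 1 D.toNat).filter (fun A : ℕ => (A : ℝ) < √D), rho D A := by
  set s := (Finset.Icc 1 D.toNat).filter (fun A : ℕ => (A : ℝ) < √D)
  have hs : ∀ f ∈ reducedForms D, f.1 ∈ s.map Nat.castEmbedding := by
    rintro ⟨A, B, C⟩ ⟨h, -⟩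
    have hA := h.2.1
    have hAD : A ≤ D := by nlinarith [h.sq_lt.1]
    refine Finset.mem_map.mpr ⟨A.toNat, ?_, by simp [hA.le]⟩
    simp only [s, Finset.mem_filter, Finset.mem_Icc]
    refine ⟨by omega, ?_⟩
    have := h.mem_window.2.2
    rwa [show ((A.toNat : ℕ) : ℝ) = A by exact_mod_cast Int.toNat_of_nonneg hA.le]
  calc caliber D = Nat.card {f ∈ reducedForms D | f.1 ∈ s.map Nat.castEmbedding} := by
        rw [Set.sep_eq_self_iff_mem_true.mpr hs]; rfl
    _ = ∑ A ∈ s, Nat.card {f ∈ reducedForms D | f.1 = A} := (sum_card_fiber_eq D s).symm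
    _ ≤ ∑ A ∈ s, rho D A := Finset.sum_le_sum fun A hA =>
        card_fiber_le_rho D (by simp only [s, Finset.mem_filter, Finset.mem_Icc] at hA; omega)

open scoped Classical in
theorem sum_rho_le_caliber {D : ℤ} (hirr : Irrational √D)
    (hprim : ∀ A B C : ℤ, D = B ^ 2 - 4 * A * C → IsPrimitiveForm A B C) :
    ∑ A ∈ (Finset.Icc 1 D.toNat).filter (fun A : ℕ => (A : ℝ) < √D / 2), rho D A ≤ caliber D := by
  set s := (Finset.Icc 1 D.toNat).filter (fun A : ℕ => (A : ℝ) < √D / 2)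
  calc ∑ A ∈ s, rho D A ≤ ∑ A ∈ s, Nat.card {f ∈ reducedForms D | f.1 = A} :=
        Finset.sum_le_sum fun A hA => by
          simp only [s, Finset.mem_filter, Finset.mem_Icc] at hA
          exact rho_le_card_fiber hirr hprim (by omega) (by linarith)
    _ = Nat.card {f ∈ reducedForms D | f.1 ∈ s.map Nat.castEmbedding} := sum_card_fiber_eq D s
    _ ≤ caliber D := Nat.card_mono (finite_reducedForms D) (Set.sep_subset _ _)

theorem one_lt_disc {d : ℕ} (h1 : 1 < d) : 1 < disc d := by
  unfold disc
  split <;> omega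

theorem disc_ne_prime_sq_mul {d p : ℕ} (hd : Squarefree d) (hp : p.Prime) (b c : ℤ) :
    disc d ≠ p ^ 2 * (b ^ 2 - 4 * c) := by
  intro h
  have hpd : ¬ p * p ∣ d := fun h' => hp.not_isUnit (hd p h')
  unfold disc at h
  split_ifs at h with h4
  · exact hpd (Int.natCast_dvd_natCast.mp ⟨b ^ 2 - 4 * c, by push_cast; linarith⟩)
  · obtain rfl | hp2 := eq_or_ne p 2
    · have hb : b ^ 2 % 4 = 0 ∨ b ^ 2 % 4 = 1 := by
        rcases Int.even_or_odd b with ⟨k, rfl⟩ | hodd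
        · left; ring_nf; omega
        · exact Or.inr (Int.sq_mod_four_eq_one_of_odd hodd)
      -- `d = b² - 4c ≡ 0` or `1 (mod 4)`, against `4 ∤ d` and `d % 4 ≠ 1`
      omega
    · have hcop : Nat.Coprime (p * p) (2 ^ 2) :=
        have := (Nat.coprime_primes hp Nat.prime_two).mpr hp2
        (this.mul_left this).pow_right 2
      exact hpd (hcop.dvd_of_dvd_mul_left
        (Int.natCast_dvd_natCast.mp ⟨b ^ 2 - 4 * c, by push_cast; linarith⟩))

theorem not_isSquare_disc {d : ℕ} (hd : Squarefree d) (h1 : 1 < d) : ¬ IsSquare (disc d) := by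
  rintro ⟨k, hk⟩
  have hk1 : k.natAbs ≠ 1 := by
    intro h
    have := Int.natAbs_mul_self' k
    rw [h] at this
    push_cast at this
    linarith [one_lt_disc h1]
  obtain ⟨p, hp, hpk⟩ := Nat.exists_prime_and_dvd hk1
  obtain ⟨m, rfl⟩ := Int.natCast_dvd.mpr hpk
  exact disc_ne_prime_sq_mul hd hp m 0 (by rw [hk]; ring)

theorem isPrimitiveForm_of_disc {d : ℕ} (hd : Squarefree d) {A B C : ℤ}
    (h : disc d = B ^ 2 - 4 * A * C) : IsPrimitiveForm A B C := by
  by_contra hg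
  obtain ⟨p, hp, hpg⟩ := Nat.exists_prime_and_dvd hg
  have hpg' : (p : ℤ) ∣ ↑(Int.gcd A (Int.gcd B C)) := Int.natCast_dvd_natCast.mpr hpg
  obtain ⟨a, rfl⟩ := hpg'.trans (Int.gcd_dvd_left _ _)
  obtain ⟨b, rfl⟩ := hpg'.trans ((Int.gcd_dvd_right _ _).trans (Int.gcd_dvd_left _ _))
  obtain ⟨c, rfl⟩ := hpg'.trans ((Int.gcd_dvd_right _ _).trans (Int.gcd_dvd_right _ _))
  exact disc_ne_prime_sq_mul hd hp b (a * c) (by rw [h]; ring)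

open scoped Classical in
theorem stmt1 (d : ℕ) (hd : Squarefree d) (h1 : 1 < d) :
    (∑ A ∈ (Finset.Icc 1 (disc d).toNat).filter
        (fun (A : ℕ) => (A : ℝ) < Real.sqrt (disc d) / 2), rho (disc d) A) ≤ caliber (disc d) ∧
    caliber (disc d) ≤
      ∑ A ∈ (Finset.Icc 1 (disc d).toNat).filter
        (fun (A : ℕ) => (A : ℝ) < Real.sqrt (disc d)), rho (disc d) A := by
  have hirr : Irrational √(disc d : ℝ) :=
    irrational_sqrt_intCast_iff.mpr ⟨not_isSquare_disc hd h1, by linarith [one_lt_disc h1]⟩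
  exact ⟨sum_rho_le_caliber hirr fun _ _ _ => isPrimitiveForm_of_disc hd, caliber_le_sum_rho _⟩
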